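/- arXiv:1307.5455 — 4 statements merged into one kernel-verified Lean document; each statement's English description precedes it below -/
import Mathlib

section
/- Let Ψ be holomorphic on {w ∈ ℂ : |w| > 1}, let c, a₀ ∈ ℂ, and suppose Ψ(w) − c·w → a₀ as |w| → ∞. If 2·w·Ψ′(w) = Ψ(w) − Ψ(−w) for all |w| > 1, then Ψ(w) = c·w + a₀ for all |w| > 1. -/
open Set Filter Topology Bornology

/-!
Subtracting the affine solution `c w + a₀` reduces to a solution `g` tending to `0` at infinity.
Then `h(w) = g(w) + g(-w)` satisfies `2 w h'(w) = 0`, so `h` is constant, and its limit forces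
`h = 0`: `g` is odd. The equation becomes `w g'(w) = g(w)`, i.e. `(g(w) / w)' = 0`, and since
`g(w) / w → 0` at infinity, `g = 0`. Constancy uses that `{w | 1 < ‖w‖}` is connected.
-/

theorem isOpen_setOf_lt_norm {E : Type*} [SeminormedAddGroup E] (R : ℝ) :
    IsOpen {x : E | R < ‖x‖} :=
  isOpen_lt continuous_const continuous_norm

theorem isPreconnected_setOf_lt_norm {E : Type*} [NormedAddCommGroup E] [NormedSpace ℝ E]
    (hE : 1 < Module.rank ℝ E) {R : ℝ} (hR : 0 ≤ R) : IsPreconnected {x : E | R < ‖x‖} := by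
  have himg : (fun p : ℝ × E => p.1 • p.2) '' (Ioi R ×ˢ Metric.sphere 0 1) =
      {x : E | R < ‖x‖} := by
    ext x
    constructor
    · rintro ⟨⟨r, u⟩, ⟨hr, hu⟩, rfl⟩
      have hr : R < r := hr
      have hu : ‖u‖ = 1 := by simpa using hu
      simpa [norm_smul, hu, abs_of_pos (hR.trans_lt hr)] using hr
    · intro hx
      have hx0 : ‖x‖ ≠ 0 := (hR.trans_lt hx).ne'
      exact ⟨(‖x‖, ‖x‖⁻¹ • x), ⟨hx, by simp [norm_smul, hx0]⟩, by simp [smul_smul, hx0]⟩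
  rw [← himg]
  exact (isPreconnected_Ioi.prod (isPreconnected_sphere hE 0 1)).image _
    (continuous_fst.smul continuous_snd).continuousOn

theorem IsOpen.eqOn_of_deriv_eq_zero_of_tendsto {𝕜 G : Type*} [RCLike 𝕜] [NormedAddCommGroup G]
    [NormedSpace 𝕜 G] {f : 𝕜 → G} {s : Set 𝕜} {l : Filter 𝕜} [l.NeBot] {a : G}
    (hs : IsOpen s) (hs' : IsPreconnected s) (hsl : s ∈ l) (hf : DifferentiableOn 𝕜 f s)
    (hf' : EqOn (deriv f) 0 s) (hlim : Tendsto f l (𝓝 a)) : EqOn f (fun _ => a) s := by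
  obtain ⟨b, hb⟩ := hs.exists_is_const_of_deriv_eq_zero hs' hf hf'
  have hba : b = a := tendsto_nhds_unique
    (tendsto_const_nhds.congr' (eventually_of_mem hsl fun x hx => (hb x hx).symm)) hlim
  exact fun x hx => (hb x hx).trans hba

theorem eqOn_of_deriv_eq_zero_of_tendsto_cobounded {G : Type*} [NormedAddCommGroup G]
    [NormedSpace ℂ G] {f : ℂ → G} {R : ℝ} {a : G} (hR : 0 ≤ R)
    (hf : DifferentiableOn ℂ f {w | R < ‖w‖}) (hf' : EqOn (deriv f) 0 {w | R < ‖w‖})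
    (hlim : Tendsto f (cobounded ℂ) (𝓝 a)) : EqOn f (fun _ => a) {w | R < ‖w‖} :=
  (isOpen_setOf_lt_norm R).eqOn_of_deriv_eq_zero_of_tendsto
    (isPreconnected_setOf_lt_norm (by simp [Complex.rank_real_complex]) hR)
    (tendsto_norm_cobounded_atTop (Ioi_mem_atTop R)) hf hf' hlim

section Exterior

variable {g : ℂ → ℂ} {R : ℝ}

theorem neg_eq_of_two_mul_deriv_eq_sub_comp_neg (hR : 0 ≤ R)
    (hg : DifferentiableOn ℂ g {w | R < ‖w‖}) (hlim : Tendsto g (cobounded ℂ) (𝓝 0))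
    (heq : ∀ w : ℂ, R < ‖w‖ → 2 * w * deriv g w = g w - g (-w)) :
    ∀ w : ℂ, R < ‖w‖ → g (-w) = -g w := by
  have hg_at : ∀ z : ℂ, R < ‖z‖ → HasDerivAt g (deriv g z) z := fun z hz =>
    (hg.differentiableAt ((isOpen_setOf_lt_norm R).mem_nhds hz)).hasDerivAt
  have hderiv : ∀ w : ℂ, R < ‖w‖ →
      HasDerivAt (fun z => g z + g (-z)) (deriv g w - deriv g (-w)) w := by
    intro w hw
    have hneg := (hg_at (-w) (by simpa using hw)).comp w (hasDerivAt_neg w)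
    exact ((hg_at w hw).add hneg).congr_deriv (by ring)
  have hderiv_zero : EqOn (deriv fun z => g z + g (-z)) 0 {w | R < ‖w‖} := by
    intro w hw
    have hw0 : w ≠ 0 := norm_pos_iff.mp (hR.trans_lt hw)
    have hsym := heq (-w) (by simpa using hw)
    rw [neg_neg] at hsym
    have : 2 * w * (deriv g w - deriv g (-w)) = 0 := by linear_combination heq w hw + hsym
    simpa [(hderiv w hw).deriv, hw0] using this
  have hsum_lim : Tendsto (fun z => g z + g (-z)) (cobounded ℂ) (𝓝 0) := by
    simpa using hlim.add (hlim.comp tendsto_neg_cobounded)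
  intro w hw
  have hsum := eqOn_of_deriv_eq_zero_of_tendsto_cobounded hR
    (fun z hz => (hderiv z hz).differentiableAt.differentiableWithinAt) hderiv_zero hsum_lim hw
  linear_combination hsum

theorem eq_zero_of_mul_deriv_eq_self {b : ℂ} (hR : 0 ≤ R)
    (hg : DifferentiableOn ℂ g {w | R < ‖w‖}) (hlim : Tendsto g (cobounded ℂ) (𝓝 b))
    (heq : ∀ w : ℂ, R < ‖w‖ → w * deriv g w = g w) :
    ∀ w : ℂ, R < ‖w‖ → g w = 0 := by
  have hne : ∀ w : ℂ, R < ‖w‖ → w ≠ 0 := fun w hw => norm_pos_iff.mp (hR.trans_lt hw)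
  have hderiv : ∀ w : ℂ, R < ‖w‖ →
      HasDerivAt (fun z => g z / z) ((deriv g w * w - g w * 1) / w ^ 2) w := fun w hw =>
    (hg.differentiableAt ((isOpen_setOf_lt_norm R).mem_nhds hw)).hasDerivAt.div
      (hasDerivAt_id w) (hne w hw)
  have hderiv_zero : EqOn (deriv fun z => g z / z) 0 {w | R < ‖w‖} := by
    intro w hw
    rw [(hderiv w hw).deriv, mul_comm, heq w hw, mul_one, sub_self, zero_div, Pi.zero_apply]
  have hquot_lim : Tendsto (fun z => g z / z) (cobounded ℂ) (𝓝 0) := by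
    simpa [div_eq_mul_inv] using hlim.mul tendsto_inv₀_cobounded
  intro w hw
  have hquot := eqOn_of_deriv_eq_zero_of_tendsto_cobounded hR
    (fun z hz => (hderiv z hz).differentiableAt.differentiableWithinAt) hderiv_zero hquot_lim hw
  simpa [hne w hw] using hquot

end Exterior

theorem difference_differential_equation (Ψ : ℂ → ℂ) (c a₀ : ℂ)
    (hdiff : DifferentiableOn ℂ Ψ {w : ℂ | 1 < ‖w‖})
    (hlim : Tendsto (fun w => Ψ w - c * w) (Bornology.cobounded ℂ) (nhds a₀))
    (heq : ∀ w : ℂ, 1 < ‖w‖ → 2 * w * deriv Ψ w = Ψ w - Ψ (-w)) :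
    ∀ w : ℂ, 1 < ‖w‖ → Ψ w = c * w + a₀ := by
  set g : ℂ → ℂ := fun w => Ψ w - c * w - a₀ with hg_def
  have hg : DifferentiableOn ℂ g {w | 1 < ‖w‖} := by fun_prop
  have hg_deriv : ∀ w : ℂ, 1 < ‖w‖ → deriv g w = deriv Ψ w - c := fun w hw => by
    have hΨ := hdiff.differentiableAt ((isOpen_setOf_lt_norm 1).mem_nhds hw)
    rw [hg_def]
    simpa using ((hΨ.hasDerivAt.sub ((hasDerivAt_id w).const_mul c)).sub_const a₀).deriv
  have hg_lim : Tendsto g (cobounded ℂ) (𝓝 0) := by simpa using hlim.sub_const a₀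
  have hg_eq : ∀ w : ℂ, 1 < ‖w‖ → 2 * w * deriv g w = g w - g (-w) := fun w hw => by
    rw [hg_deriv w hw, hg_def]
    linear_combination heq w hw
  have hg_odd := neg_eq_of_two_mul_deriv_eq_sub_comp_neg zero_le_one hg hg_lim hg_eq
  have hg_zero := eq_zero_of_mul_deriv_eq_self zero_le_one hg hg_lim fun w hw => by
    linear_combination (hg_eq w hw - hg_odd w hw) / 2
  intro w hw
  have hgw := hg_zero w hw
  simp only [hg_def] at hgw
  linear_combination hgw
end

section
/- Let Ψ : {w ∈ ℂ : |w| ≥ 1} → ℂ be continuous and injective, holomorphic on {w : |w| > 1}, and suppose there exists a₀ ∈ ℂ with Ψ(w) − w → a₀ as |w| → ∞. Then (1/2π) ∫_0^{2π} log |Ψ(e^{it}) − Ψ(−e^{it})| dt = log 2. -/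
/-!
In the coordinate `z = 1/w`, the function `H(w) = (Ψ(w) - Ψ(-w)) / w` becomes
`z ↦ z (Ψ(1/z) - Ψ(-1/z))` on the closed unit disc. The normalisation `Ψ(w) - w → a₀` makes
`H(∞) = 2` a removable singularity, and injectivity of `Ψ` keeps `H` zero-free, since `1/z` and
`-1/z` are distinct points of `|w| ≥ 1`. Hence `log |H|` is harmonic on the disc and continuous up
to the circle, so its circle average is `log |H(∞)| = log 2`. On the unit circle `|H| = |Ψ(w) - Ψ(-w)|`,
and `w ↦ 1/w` preserves circle averages.
-/

open Set Filter Metric Topology Real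

theorem DiffContOnCl.circleAverage_log_norm {g : ℂ → ℂ} {c : ℂ} {R : ℝ}
    (hg : DiffContOnCl ℂ g (ball c |R|)) (hg₀ : ∀ z ∈ closure (ball c |R|), g z ≠ 0) :
    Real.circleAverage (fun z ↦ log ‖g z‖) c R = log ‖g c‖ :=
  InnerProductSpace.HarmonicContOnCl.circleAverage_eq
    ⟨fun z hz ↦ (hg.differentiableOn.analyticAt (isOpen_ball.mem_nhds hz)).harmonicAt_log_norm
        (hg₀ z (subset_closure hz)),
     hg.continuousOn.norm.log fun z hz ↦ norm_ne_zero_iff.2 (hg₀ z hz)⟩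

section Inversion

variable {𝕜 : Type*} [NormedDivisionRing 𝕜]

theorem mapsTo_inv_closedBall_diff_zero :
    MapsTo (·⁻¹) (closedBall (0 : 𝕜) 1 \ {0}) {w | 1 ≤ ‖w‖} := fun z ⟨hz, hz₀⟩ ↦ by
  rw [mem_closedBall_zero_iff] at hz
  rw [mem_ofPred_eq, norm_inv, one_le_inv₀ (norm_pos_iff.2 hz₀)]
  exact hz

theorem mapsTo_inv_ball_diff_zero :
    MapsTo (·⁻¹) (ball (0 : 𝕜) 1 \ {0}) {w | 1 < ‖w‖} := fun z ⟨hz, hz₀⟩ ↦ by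
  rw [mem_ball_zero_iff] at hz
  rw [mem_ofPred_eq, norm_inv, one_lt_inv₀ (norm_pos_iff.2 hz₀)]
  exact hz

end Inversion

theorem tendsto_sub_comp_neg_div_cobounded {𝕜 : Type*} [NormedField 𝕜] {f : 𝕜 → 𝕜} {a : 𝕜}
    (hf : Tendsto (fun w ↦ f w - w) (Bornology.cobounded 𝕜) (𝓝 a)) :
    Tendsto (fun w ↦ (f w - f (-w)) / w) (Bornology.cobounded 𝕜) (𝓝 2) := by
  have hodd : Tendsto (fun w ↦ (f w - w) - (f (-w) - -w)) (Bornology.cobounded 𝕜) (𝓝 0) := by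
    simpa using hf.sub (hf.comp tendsto_neg_cobounded)
  have := (hodd.mul tendsto_inv₀_cobounded).add_const 2
  rw [zero_mul, zero_add] at this
  refine this.congr' ?_
  filter_upwards [Bornology.eventually_ne_cobounded 0] with w hw
  field_simp
  ring

/-- The function `H(w) = (Ψ w - Ψ (-w)) / w` in the coordinate `z = w⁻¹`, with `H(∞) = 2`. -/
noncomputable def oddQuotient (Ψ : ℂ → ℂ) : ℂ → ℂ :=
  Function.update (fun z ↦ z * (Ψ z⁻¹ - Ψ (-z⁻¹))) 0 2

namespace oddQuotient

variable {Ψ : ℂ → ℂ}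

@[simp]
theorem apply_zero : oddQuotient Ψ 0 = 2 := Function.update_self ..

theorem apply_of_ne_zero {z : ℂ} (hz : z ≠ 0) : oddQuotient Ψ z = z * (Ψ z⁻¹ - Ψ (-z⁻¹)) :=
  Function.update_of_ne hz ..

theorem norm_of_norm_eq_one {z : ℂ} (hz : ‖z‖ = 1) :
    ‖oddQuotient Ψ z‖ = ‖Ψ z⁻¹ - Ψ (-z⁻¹)‖ := by
  rw [apply_of_ne_zero (norm_ne_zero_iff.1 (hz ▸ one_ne_zero)), norm_mul, hz, one_mul]

theorem continuousAt_zero {a₀ : ℂ}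
    (hlim : Tendsto (fun w ↦ Ψ w - w) (Bornology.cobounded ℂ) (𝓝 a₀)) :
    ContinuousAt (oddQuotient Ψ) 0 := by
  refine continuousAt_update_same.2 <|
    ((tendsto_sub_comp_neg_div_cobounded hlim).comp tendsto_inv₀_nhdsNE_zero).congr fun z ↦ ?_
  simp [div_eq_mul_inv, mul_comm]

theorem continuousOn_closedBall {a₀ : ℂ} (hcont : ContinuousOn Ψ {w : ℂ | 1 ≤ ‖w‖})
    (hlim : Tendsto (fun w ↦ Ψ w - w) (Bornology.cobounded ℂ) (𝓝 a₀)) :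
    ContinuousOn (oddQuotient Ψ) (closedBall 0 1) := by
  refine continuousOn_update_iff.2 ⟨?_, fun _ ↦ ?_⟩
  · have hinv : ContinuousOn (·⁻¹) (closedBall (0 : ℂ) 1 \ {0}) :=
      continuousOn_inv₀.mono fun z hz ↦ hz.2
    exact continuousOn_id.mul <| (hcont.comp hinv mapsTo_inv_closedBall_diff_zero).sub <|
      hcont.comp hinv.neg fun z hz ↦ by simpa using mapsTo_inv_closedBall_diff_zero hz
  · exact (continuousAt_update_same.1 (continuousAt_zero hlim)).mono_left
      (nhdsWithin_mono _ fun z hz ↦ hz.2)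

theorem differentiableOn_ball {a₀ : ℂ} (hdiff : DifferentiableOn ℂ Ψ {w : ℂ | 1 < ‖w‖})
    (hlim : Tendsto (fun w ↦ Ψ w - w) (Bornology.cobounded ℂ) (𝓝 a₀)) :
    DifferentiableOn ℂ (oddQuotient Ψ) (ball 0 1) := by
  refine (Complex.differentiableOn_compl_singleton_and_continuousAt_iff
    (ball_mem_nhds 0 one_pos)).1 ⟨?_, continuousAt_zero hlim⟩
  have hinv : DifferentiableOn ℂ (·⁻¹) (ball (0 : ℂ) 1 \ {0}) :=
    differentiableOn_inv.mono fun z hz ↦ hz.2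
  refine (differentiableOn_id.mul <| (hdiff.comp hinv mapsTo_inv_ball_diff_zero).sub <|
    hdiff.comp hinv.neg fun z hz ↦ by simpa using mapsTo_inv_ball_diff_zero hz).congr
    fun z hz ↦ apply_of_ne_zero hz.2

theorem ne_zero (hinj : InjOn Ψ {w : ℂ | 1 ≤ ‖w‖}) {z : ℂ} (hz : z ∈ closedBall 0 1) :
    oddQuotient Ψ z ≠ 0 := by
  rcases eq_or_ne z 0 with rfl | hz₀
  · simp
  have hw := mapsTo_inv_closedBall_diff_zero ⟨hz, hz₀⟩
  rw [apply_of_ne_zero hz₀]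
  exact mul_ne_zero hz₀ <| sub_ne_zero.2 fun h ↦
    inv_ne_zero hz₀ <| self_eq_neg.1 <| hinj hw (by simpa using hw) h

end oddQuotient

theorem solynin_mean_value (Ψ : ℂ → ℂ) (a₀ : ℂ)
    (hcont : ContinuousOn Ψ {w : ℂ | 1 ≤ ‖w‖})
    (hinj : Set.InjOn Ψ {w : ℂ | 1 ≤ ‖w‖})
    (hdiff : DifferentiableOn ℂ Ψ {w : ℂ | 1 < ‖w‖})
    (hlim : Tendsto (fun w => Ψ w - w) (Bornology.cobounded ℂ) (nhds a₀)) :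
    (1 / (2 * Real.pi)) * ∫ t in (0:ℝ)..(2 * Real.pi),
        Real.log (‖Ψ (Complex.exp (t * Complex.I)) -
          Ψ (-Complex.exp (t * Complex.I))‖) = Real.log 2 := by
  have hH : DiffContOnCl ℂ (oddQuotient Ψ) (ball 0 |1|) := by
    rw [abs_one]
    exact ⟨oddQuotient.differentiableOn_ball hdiff hlim,
      closure_ball (0 : ℂ) one_ne_zero ▸ oddQuotient.continuousOn_closedBall hcont hlim⟩
  calc _ = circleAverage (fun w ↦ log ‖Ψ w - Ψ (-w)‖) 0 1 := by
        simp [circleAverage_def, circleMap]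
    _ = circleAverage (fun z ↦ log ‖Ψ z⁻¹ - Ψ (-z⁻¹)‖) 0 1 :=
        circleAverage_zero_one_congr_inv.symm
    _ = circleAverage (fun z ↦ log ‖oddQuotient Ψ z‖) 0 1 :=
        circleAverage_congr_sphere fun z hz ↦ by
          rw [oddQuotient.norm_of_norm_eq_one (by simpa using hz)]
    _ = log 2 := by
        rw [hH.circleAverage_log_norm fun z hz ↦
          oddQuotient.ne_zero hinj (by simpa [closure_ball] using hz)]
        simp
end

section
/- Let p_1, …, p_m be nonzero polynomials with complex coefficients, let p = ∏_{k=1}^m p_k, and let n = deg p. Then ∏_{k=1}^m ‖p_k‖_D ≤ 2^n ‖p‖_D, where D = {z ∈ ℂ : |z| ≤ 1} is the closed unit disk. -/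
open Polynomial Set Metric

/-- The sup norm of a polynomial on a set `E ⊆ ℂ`. -/
noncomputable def polyNorm (E : Set ℂ) (p : Polynomial ℂ) : ℝ :=
  ⨆ z : E, ‖p.eval (z : ℂ)‖

/-!
The Mahler measure `M(q)` is multiplicative and satisfies `2^(-deg q) ‖q‖_D ≤ M(q) ≤ ‖q‖_D`. The
upper bound holds because `M(q)` is at most the `L²` norm of `q` on the unit circle (Landau's
inequality and Parseval), the lower one because each coefficient satisfies
`|q_k| ≤ C(deg q, k) M(q)`. Hence `∏ ‖p_k‖_D ≤ 2^n ∏ M(p_k) = 2^n M(p) ≤ 2^n ‖p‖_D`.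
-/

section polyNorm

variable {E : Set ℂ}

theorem bddAbove_range_norm_eval (hE : IsCompact E) (p : ℂ[X]) :
    BddAbove (range fun z : E ↦ ‖p.eval (z : ℂ)‖) := by
  have := isCompact_iff_compactSpace.mp hE
  exact (isCompact_range (by fun_prop)).bddAbove

theorem norm_eval_le_polyNorm (hE : IsCompact E) (p : ℂ[X]) {z : ℂ} (hz : z ∈ E) :
    ‖p.eval z‖ ≤ polyNorm E p :=
  le_ciSup (bddAbove_range_norm_eval hE p) ⟨z, hz⟩

theorem polyNorm_nonneg (E : Set ℂ) (p : ℂ[X]) : 0 ≤ polyNorm E p :=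
  Real.iSup_nonneg fun _ ↦ norm_nonneg _

theorem polyNorm_le (hE : E.Nonempty) {p : ℂ[X]} {c : ℝ} (h : ∀ z ∈ E, ‖p.eval z‖ ≤ c) :
    polyNorm E p ≤ c :=
  have := hE.to_subtype
  ciSup_le fun z ↦ h z z.2

end polyNorm

namespace Polynomial

theorem mahlerMeasure_finset_prod {ι : Type*} (s : Finset ι) (p : ι → ℂ[X]) :
    (∏ i ∈ s, p i).mahlerMeasure = ∏ i ∈ s, (p i).mahlerMeasure := by
  rw [Finset.prod_eq_multiset_prod, prod_mahlerMeasure_eq_mahlerMeasure_prod, Multiset.map_map]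
  rfl

theorem mahlerMeasure_le_polyNorm {E : Set ℂ} (hE : IsCompact E)
    (hsphere : sphere (0 : ℂ) 1 ⊆ E) (p : ℂ[X]) : p.mahlerMeasure ≤ polyNorm E p := by
  have hsq : Real.circleAverage (fun z ↦ ‖p.eval z‖ ^ 2) 0 1 ≤ polyNorm E p ^ 2 :=
    Real.circleAverage_mono_on_of_le_circle
      (ContinuousOn.circleIntegrable zero_le_one (by fun_prop)) fun z hz ↦ by
        gcongr
        exact norm_eval_le_polyNorm hE p (hsphere (by simpa using hz))
  calc p.mahlerMeasure ≤ √(∑ i ∈ p.support, ‖p.coeff i‖ ^ 2) :=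
        p.mahlerMeasure_le_sqrt_sum_sq_norm_coeff
    _ = √(Real.circleAverage (fun z ↦ ‖p.eval z‖ ^ 2) 0 1) := by
        rw [p.sum_sq_norm_coeff_eq_circleAverage]
    _ ≤ √(polyNorm E p ^ 2) := Real.sqrt_le_sqrt hsq
    _ = polyNorm E p := Real.sqrt_sq (polyNorm_nonneg E p)

theorem norm_eval_le_two_pow_natDegree_mul_mahlerMeasure (p : ℂ[X]) {z : ℂ} (hz : ‖z‖ ≤ 1) :
    ‖p.eval z‖ ≤ 2 ^ p.natDegree * p.mahlerMeasure :=
  calc ‖p.eval z‖ ≤ ∑ k ∈ Finset.range (p.natDegree + 1), ‖p.coeff k * z ^ k‖ := by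
        rw [eval_eq_sum_range]
        exact norm_sum_le _ _
    _ ≤ ∑ k ∈ Finset.range (p.natDegree + 1), (p.natDegree.choose k : ℝ) * p.mahlerMeasure := by
        gcongr with k
        rw [norm_mul, norm_pow]
        exact (mul_le_of_le_one_right (norm_nonneg _) (pow_le_one₀ (norm_nonneg z) hz)).trans
          (p.norm_coeff_le_choose_mul_mahlerMeasure k)
    _ = 2 ^ p.natDegree * p.mahlerMeasure := by
        rw [← Finset.sum_mul, ← Nat.cast_sum, Nat.sum_range_choose, Nat.cast_pow, Nat.cast_ofNat]

theorem polyNorm_closedBall_le_two_pow_natDegree_mul_mahlerMeasure (p : ℂ[X]) :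
    polyNorm (closedBall 0 1) p ≤ 2 ^ p.natDegree * p.mahlerMeasure :=
  polyNorm_le ⟨0, by simp⟩ fun _ hz ↦
    p.norm_eval_le_two_pow_natDegree_mul_mahlerMeasure (mem_closedBall_zero_iff.mp hz)

end Polynomial

theorem mahler_inequality (m : ℕ) (p : Fin m → Polynomial ℂ) (hp : ∀ k, p k ≠ 0) :
    ∏ k, polyNorm (closedBall (0:ℂ) 1) (p k) ≤
      2 ^ (∏ k, p k).natDegree * polyNorm (closedBall (0:ℂ) 1) (∏ k, p k) := by
  have hdeg : (∏ k, p k).natDegree = ∑ k, (p k).natDegree :=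
    natDegree_prod _ _ fun k _ ↦ hp k
  calc ∏ k, polyNorm (closedBall 0 1) (p k)
      ≤ ∏ k, (2 ^ (p k).natDegree * (p k).mahlerMeasure) :=
        Finset.prod_le_prod (fun k _ ↦ polyNorm_nonneg _ _) fun k _ ↦
          (p k).polyNorm_closedBall_le_two_pow_natDegree_mul_mahlerMeasure
    _ = 2 ^ (∏ k, p k).natDegree * (∏ k, p k).mahlerMeasure := by
        rw [Finset.prod_mul_distrib, Finset.prod_pow_eq_pow_sum, hdeg, mahlerMeasure_finset_prod]
    _ ≤ 2 ^ (∏ k, p k).natDegree * polyNorm (closedBall 0 1) (∏ k, p k) := by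
        gcongr
        exact mahlerMeasure_le_polyNorm (isCompact_closedBall 0 1) sphere_subset_closedBall _
end

section
/- The limit lim_{n→∞} (1/n) · log( 2^{n−1} · ∏_{k=1}^{⌊n/2⌋} (1 + cos((2k−1)π/(2n)))² ) exists and equals log 2 + (2/π) ∫_0^{π/2} log(1 + sin t) dt; equivalently, the n-th root of Borwein's constant 2^{n−1} ∏_{k=1}^{⌊n/2⌋} (1 + cos((2k−1)π/(2n)))² converges to 2·exp((2/π) ∫_0^{π/2} log(1 + sin t) dt) ≈ 3.2099123 as n → ∞. -/
/-!
Taking logarithms, `(1/n) log` of the constant is `(n - 1)/n · log 2` plus `2/π` times the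
midpoint Riemann sum `(π/n) ∑_{k < ⌊n/2⌋} f((2k+1)π/(2n))` of `f t = log (1 + cos t)`.
Since `f` is decreasing on `[0, π)`, this sum is squeezed between the integral of `f` over
`[π/(2n), π/(2n) + ⌊n/2⌋π/n]` and that integral plus `(π/n)` times the drop of `f` across the
interval; the endpoints tend to `0` and `π/2`, so both bounds tend to `∫₀^{π/2} f`.
The substitution `t ↦ π/2 - t` turns this into the integral of `log (1 + sin t)`.
-/

open Filter Real Set MeasureTheory intervalIntegral Topology

section RiemannSum

variable {f : ℝ → ℝ} {c h : ℝ} {m : ℕ}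

lemma AntitoneOn.comp_const_add_mul (hf : AntitoneOn f (Icc c (c + h * m))) (hh : 0 < h) :
    AntitoneOn (fun u => f (c + h * u)) (Icc 0 (0 + m)) := by
  have hmem : ∀ u ∈ Icc (0 : ℝ) (0 + m), c + h * u ∈ Icc c (c + h * m) := fun u hu => by
    rw [zero_add] at hu
    constructor <;> nlinarith [hu.1, hu.2]
  exact fun u hu v hv huv => hf (hmem u hu) (hmem v hv) (by gcongr)

lemma AntitoneOn.integral_le_mul_sum (hf : AntitoneOn f (Icc c (c + h * m))) (hh : 0 < h) :
    ∫ x in c..c + h * m, f x ≤ h * ∑ k ∈ Finset.range m, f (c + h * k) := by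
  have h_le := (hf.comp_const_add_mul hh).integral_le_sum
  rw [integral_comp_add_mul _ hh.ne', smul_eq_mul, inv_mul_le_iff₀ hh] at h_le
  simpa using h_le

lemma AntitoneOn.mul_sum_le_integral_add (hf : AntitoneOn f (Icc c (c + h * m))) (hh : 0 < h) :
    h * ∑ k ∈ Finset.range m, f (c + h * k) ≤
      (∫ x in c..c + h * m, f x) + h * (f c - f (c + h * m)) := by
  have h_le := (hf.comp_const_add_mul hh).sum_le_integral
  rw [integral_comp_add_mul _ hh.ne', smul_eq_mul, le_inv_mul_iff₀ hh] at h_le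
  have h_tel := Finset.sum_range_sub' (fun k : ℕ => f (c + h * k)) m
  simp only [Nat.cast_add, Nat.cast_one, Nat.cast_zero, mul_zero, add_zero, zero_add,
    Finset.sum_sub_distrib] at h_le h_tel
  nlinarith

end RiemannSum

theorem tendsto_intervalIntegral_of_continuousOn {ι : Type*} {l : Filter ι} {f : ℝ → ℝ}
    {p q a b : ℝ} {u v : ι → ℝ} (hf : ContinuousOn f (Icc p q)) (ha : a ∈ Ioo p q)
    (hb : b ∈ Ioo p q) (hu : Tendsto u l (𝓝 a)) (hv : Tendsto v l (𝓝 b)) :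
    Tendsto (fun i => ∫ x in u i..v i, f x) l (𝓝 (∫ x in a..b, f x)) := by
  have hpq : p ≤ q := (ha.1.trans ha.2).le
  set G := fun x => ∫ t in p..x, f t
  have hG : ContinuousOn G (Icc p q) := by
    simpa [uIcc_of_le hpq] using continuousOn_primitive_interval (a := p) (b := q)
      (μ := volume) (by simpa [uIcc_of_le hpq] using hf.integrableOn_Icc)
  have h_sub : ∀ x ∈ Icc p q, ∀ y ∈ Icc p q, ∫ t in x..y, f t = G y - G x := by
    intro x hx y hy
    have hint : ∀ z ∈ Icc p q, IntervalIntegrable f volume p z := fun z hz =>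
      (hf.mono (uIcc_subset_Icc (left_mem_Icc.2 hpq) hz)).intervalIntegrable
    exact (integral_interval_sub_left (hint y hy) (hint x hx)).symm
  have hGa := (hG.continuousAt (Icc_mem_nhds ha.1 ha.2)).tendsto.comp hu
  have hGb := (hG.continuousAt (Icc_mem_nhds hb.1 hb.2)).tendsto.comp hv
  rw [h_sub a (Ioo_subset_Icc_self ha) b (Ioo_subset_Icc_self hb)]
  refine (hGb.sub hGa).congr' ?_
  filter_upwards [hu.eventually (Icc_mem_nhds ha.1 ha.2), hv.eventually (Icc_mem_nhds hb.1 hb.2)]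
    with i hui hvi
  exact (h_sub _ hui _ hvi).symm

lemma one_add_cos_pos {t : ℝ} (ht : t ∈ Ioo (-π) π) : 0 < 1 + cos t := by
  have h_half : 0 < cos (t / 2) := cos_pos_of_mem_Ioo ⟨by linarith [ht.1], by linarith [ht.2]⟩
  have h_eq : 1 + cos t = 2 * cos (t / 2) ^ 2 := by
    rw [cos_sq, show 2 * (t / 2) = t by ring]
    ring
  rw [h_eq]
  positivity

lemma continuousOn_log_one_add_cos : ContinuousOn (fun t => log (1 + cos t)) (Ioo (-π) π) :=
  (continuous_const.add continuous_cos).continuousOn.log fun _ ht => (one_add_cos_pos ht).ne'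

lemma antitoneOn_log_one_add_cos : AntitoneOn (fun t => log (1 + cos t)) (Ico 0 π) := by
  intro s hs t ht hst
  exact log_le_log (one_add_cos_pos ⟨by linarith [ht.1, pi_pos], ht.2⟩)
    (by linarith [cos_le_cos_of_nonneg_of_le_pi hs.1 ht.2.le hst])

lemma tendsto_nat_div_two_div_self :
    Tendsto (fun n : ℕ => ((n / 2 : ℕ) : ℝ) / n) atTop (𝓝 (1 / 2)) := by
  have h := (tendsto_nat_floor_mul_div_atTop (R := ℝ) (a := 1 / 2) (by norm_num)).comp
    tendsto_natCast_atTop_atTop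
  refine h.congr fun n => ?_
  simp only [Function.comp_apply, one_div_mul_eq_div]
  exact_mod_cast congrArg (fun k : ℕ => (k : ℝ) / n) (Nat.floor_div_eq_div (K := ℝ) n 2)

theorem tendsto_riemannSum_log_one_add_cos :
    Tendsto (fun n : ℕ =>
        π / n * ∑ k ∈ Finset.range (n / 2), log (1 + cos (π / (2 * n) + π / n * k)))
      atTop (𝓝 (∫ t in (0 : ℝ)..π / 2, log (1 + cos t))) := by
  set f := fun t => log (1 + cos t)
  have hc : Tendsto (fun n : ℕ => π / (2 * n)) atTop (𝓝 0) := by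
    simpa only [div_div] using tendsto_const_div_atTop_nhds_zero_nat (π / 2)
  have hh : Tendsto (fun n : ℕ => π / n) atTop (𝓝 0) := tendsto_const_div_atTop_nhds_zero_nat π
  set e := fun n : ℕ => π / (2 * n) + π / n * (n / 2 : ℕ)
  have he : Tendsto e atTop (𝓝 (π / 2)) := by
    have := hc.add (tendsto_nat_div_two_div_self.const_mul π)
    rw [zero_add, mul_one_div] at this
    refine this.congr fun n => ?_
    simp only [e, mul_div_assoc']
    ring
  have hπ₃ := pi_gt_three
  have hπ₄ := pi_lt_four
  have hI := tendsto_intervalIntegral_of_continuousOn (f := f) (p := -3) (q := 3)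
    (continuousOn_log_one_add_cos.mono (Icc_subset_Ioo (by linarith) (by linarith)))
    ⟨by linarith, by linarith⟩ ⟨by linarith, by linarith⟩ hc he
  have hf_at : ∀ x ∈ Ioo (-π) π, ContinuousAt f x := fun x hx =>
    continuousOn_log_one_add_cos.continuousAt (isOpen_Ioo.mem_nhds hx)
  have herr : Tendsto (fun n : ℕ => π / n * (f (π / (2 * n)) - f (e n))) atTop (𝓝 0) := by
    simpa using hh.mul (((hf_at 0 ⟨by linarith, by linarith⟩).tendsto.comp hc).sub
      ((hf_at (π / 2) ⟨by linarith, by linarith⟩).tendsto.comp he))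
  have hanti : ∀ᶠ n : ℕ in atTop, AntitoneOn f (Icc (π / (2 * n)) (e n)) := by
    filter_upwards [eventually_ge_atTop 2] with n hn
    refine antitoneOn_log_one_add_cos.mono (Icc_subset_Ico (by positivity) ?_)
    have hn' : (0 : ℝ) < n := by positivity
    have hlt : (2 * (n / 2 : ℕ) + 1 : ℝ) < 2 * n := by
      exact_mod_cast (by omega : 2 * (n / 2) + 1 < 2 * n)
    calc e n = π * (2 * (n / 2 : ℕ) + 1) / (2 * n) := by simp only [e]; field_simp; ring
      _ < π := by rw [div_lt_iff₀ (by positivity)]; nlinarith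
  refine tendsto_of_tendsto_of_tendsto_of_le_of_le' hI (by simpa using hI.add herr) ?_ ?_
  · filter_upwards [hanti, eventually_gt_atTop 0] with n hn hn0
    exact hn.integral_le_mul_sum (div_pos pi_pos (Nat.cast_pos.2 hn0))
  · filter_upwards [hanti, eventually_gt_atTop 0] with n hn hn0
    exact hn.mul_sum_le_integral_add (div_pos pi_pos (Nat.cast_pos.2 hn0))

lemma integral_log_one_add_sin_eq_cos :
    ∫ t in (0 : ℝ)..π / 2, log (1 + sin t) = ∫ t in (0 : ℝ)..π / 2, log (1 + cos t) := by
  simpa [sin_pi_div_two_sub] using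
    (integral_comp_sub_left (fun t => log (1 + sin t)) (π / 2) (a := 0) (b := π / 2)).symm

noncomputable def borweinConstant (n : ℕ) : ℝ :=
  2 ^ (n - 1) * ∏ k ∈ Finset.range (n / 2), (1 + cos ((2 * (k : ℝ) + 1) * π / (2 * n))) ^ 2

lemma log_borweinConstant (n : ℕ) :
    log (borweinConstant n) = (n - 1 : ℕ) * log 2 +
      2 * ∑ k ∈ Finset.range (n / 2), log (1 + cos (π / (2 * n) + π / n * k)) := by
  have h_arg : ∀ k : ℕ, (2 * (k : ℝ) + 1) * π / (2 * n) = π / (2 * n) + π / n * k := fun k => by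
    ring
  have h_pos : ∀ k ∈ Finset.range (n / 2), 0 < 1 + cos ((2 * (k : ℝ) + 1) * π / (2 * n)) := by
    intro k hk
    have hk' : 2 * k + 2 ≤ n := by have := Finset.mem_range.1 hk; omega
    have hn : (0 : ℝ) < 2 * n := by norm_cast; omega
    have hlt : (2 * k + 1 : ℝ) < 2 * n := by exact_mod_cast (by omega : 2 * k + 1 < 2 * n)
    refine one_add_cos_pos ⟨?_, ?_⟩
    · have : 0 ≤ (2 * (k : ℝ) + 1) * π / (2 * n) := by positivity
      linarith [pi_pos]
    · rw [div_lt_iff₀ hn]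
      nlinarith [pi_pos]
  have h_ne : ∀ k ∈ Finset.range (n / 2),
      (1 + cos ((2 * (k : ℝ) + 1) * π / (2 * n))) ^ 2 ≠ 0 := fun k hk =>
    pow_ne_zero 2 (h_pos k hk).ne'
  rw [borweinConstant, log_mul (by positivity) (Finset.prod_ne_zero_iff.2 h_ne), log_pow,
    log_prod h_ne, Finset.mul_sum]
  simp only [log_pow, h_arg, Nat.cast_ofNat]

theorem borwein_constant_asymptotics :
    Tendsto (fun n : ℕ => (1 / (n : ℝ)) *
        Real.log ((2 : ℝ) ^ (n - 1) *
          ∏ k ∈ Finset.range (n / 2),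
            (1 + Real.cos ((2 * (k : ℝ) + 1) * Real.pi / (2 * n))) ^ 2))
      atTop
      (nhds (Real.log 2 +
        (2 / Real.pi) * ∫ t in (0:ℝ)..(Real.pi / 2), Real.log (1 + Real.sin t))) := by
  change Tendsto (fun n : ℕ => 1 / (n : ℝ) * log (borweinConstant n)) atTop _
  have h_one : Tendsto (fun n : ℕ => 1 - 1 / (n : ℝ)) atTop (𝓝 1) := by
    simpa using (tendsto_const_nhds (x := (1 : ℝ))).sub tendsto_one_div_atTop_nhds_zero_nat
  have h_lim := (h_one.mul_const (log 2)).add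
    (tendsto_riemannSum_log_one_add_cos.const_mul (2 / π))
  rw [one_mul, ← integral_log_one_add_sin_eq_cos] at h_lim
  refine h_lim.congr' ?_
  filter_upwards [eventually_gt_atTop 0] with n hn
  rw [log_borweinConstant, Nat.cast_sub hn]
  field_simp
  ring
end
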